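/- arXiv:2003.00371 — 3 statements merged into one kernel-verified Lean document; each statement's English description precedes it below -/
import Mathlib

section
/- Let Ω* be the minimizer of F(Ω) = tr(S̃Ω) − log det(Ω) + γ1‖Ω‖₁ + γ2‖Ω‖_F² over the set of p×p symmetric positive definite matrices, with γ1 > 0 and γ2 > 0. Then αI ⪯ Ω* ⪯ βI, where α⁻¹ = (ρ_1(S̃) + γ1·p + √((ρ_1(S̃) + γ1·p)² + 8γ2))/2 and β⁻¹ = (ρ_p(S̃) − γ1·p + √((ρ_p(S̃) − γ1·p)² + 8γ2))/2. -/
open Matrix BigOperators Kronecker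

/-- Frobenius norm of a real matrix. -/
noncomputable def frobNorm {n : Type*} [Fintype n] (A : Matrix n n ℝ) : ℝ :=
  Real.sqrt (∑ i, ∑ j, (A i j)^2)

/-- Entrywise L1 norm of a real matrix. -/
noncomputable def l1Norm {n : Type*} [Fintype n] (A : Matrix n n ℝ) : ℝ :=
  ∑ i, ∑ j, |A i j|

/-- Spectral (ℓ2 operator) norm of a real matrix. -/
noncomputable def specNorm {n : Type*} [Fintype n] [DecidableEq n] (A : Matrix n n ℝ) : ℝ :=
  ‖Matrix.toEuclideanCLM (𝕜 := ℝ) A‖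

/-- Largest eigenvalue ρ₁(A) of a symmetric real matrix (junk value 0 otherwise). -/
noncomputable def maxEig {n : Type*} [Fintype n] [DecidableEq n] (A : Matrix n n ℝ) : ℝ :=
  if h : A.IsHermitian then ⨆ i, h.eigenvalues i else 0

/-- Smallest eigenvalue ρ_p(A) of a symmetric real matrix (junk value 0 otherwise). -/
noncomputable def minEig {n : Type*} [Fintype n] [DecidableEq n] (A : Matrix n n ℝ) : ℝ :=
  if h : A.IsHermitian then ⨅ i, h.eigenvalues i else 0

/-- Loewner order: A ⪯ B iff B - A is positive semidefinite. -/
def loewnerLE {n : Type*} [Fintype n] (A B : Matrix n n ℝ) : Prop := (B - A).PosSemidef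

/-- Entrywise soft-thresholding operator. -/
noncomputable def Sft {n : Type*} (A : Matrix n n ℝ) (τ : ℝ) : Matrix n n ℝ :=
  Matrix.of fun i j => Real.sign (A i j) * max (|A i j| - τ) 0

/-- The elastic-net penalized Gaussian likelihood objective
  F(Ω) = tr(S̃Ω) − log det Ω + γ1‖Ω‖₁ + γ2‖Ω‖_F². -/
noncomputable def genObj {n : Type*} [Fintype n] [DecidableEq n]
    (S : Matrix n n ℝ) (γ1 γ2 : ℝ) (Ω : Matrix n n ℝ) : ℝ :=
  (S * Ω).trace - Real.log Ω.det + γ1 * l1Norm Ω + γ2 * (frobNorm Ω)^2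

/-
Perturb the minimiser along a unit eigenvector `v` of `Ω*`, with eigenvalue `θ`, to
`Ω* + t vvᵀ`. By the matrix determinant lemma the objective changes by
`t vᵀS̃v - log (1 + t/θ) + γ₂ (2θt + t²)` plus an `ℓ₁` term of size at most `γ₁ p |t|`, and this
change is nonnegative for small `|t|`. Comparing one-sided slopes at `t = 0` gives
`|vᵀS̃v - θ⁻¹ + 2γ₂θ| ≤ γ₁ p`, so `θ⁻¹ - 2γ₂θ` lies between `ρ_p(S̃) - γ₁p` and `ρ₁(S̃) + γ₁p`.
The map `x ↦ x⁻¹ - 2γ₂x` is strictly decreasing on `(0, ∞)`, and `α`, `β` are exactly the points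
where it takes these two values.
-/

open scoped MatrixOrder

namespace Matrix

theorem PosDef.of_smul_one_le {n : Type*} [DecidableEq n] {A : Matrix n n ℝ} {c : ℝ}
    (hc : 0 < c) (h : c • (1 : Matrix n n ℝ) ≤ A) : A.PosDef := by
  simpa using (PosDef.one.smul hc).add_posSemidef h

variable {n : Type*} [Fintype n] [DecidableEq n]

theorem IsHermitian.smul_one_le_iff {A : Matrix n n ℝ} (hA : A.IsHermitian) {c : ℝ} :
    c • (1 : Matrix n n ℝ) ≤ A ↔ ∀ i, c ≤ hA.eigenvalues i := by
  rw [← Algebra.algebraMap_eq_smul_one, algebraMap_le_iff_le_spectrum hA.isSelfAdjoint,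
    hA.spectrum_real_eq_range_eigenvalues, Set.forall_mem_range]

theorem IsHermitian.le_smul_one_iff {A : Matrix n n ℝ} (hA : A.IsHermitian) {c : ℝ} :
    A ≤ c • (1 : Matrix n n ℝ) ↔ ∀ i, hA.eigenvalues i ≤ c := by
  rw [← Algebra.algebraMap_eq_smul_one, le_algebraMap_iff_spectrum_le hA.isSelfAdjoint,
    hA.spectrum_real_eq_range_eigenvalues, Set.forall_mem_range]

theorem dotProduct_mulVec_le_of_le_smul_one {A : Matrix n n ℝ} {c : ℝ}
    (h : A ≤ c • (1 : Matrix n n ℝ)) (x : n → ℝ) : x ⬝ᵥ (A *ᵥ x) ≤ c * (x ⬝ᵥ x) := by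
  have := h.dotProduct_mulVec_nonneg x
  rw [star_trivial, sub_mulVec, dotProduct_sub, smul_mulVec, one_mulVec, dotProduct_smul,
    smul_eq_mul] at this
  linarith

theorem le_dotProduct_mulVec_of_smul_one_le {A : Matrix n n ℝ} {c : ℝ}
    (h : c • (1 : Matrix n n ℝ) ≤ A) (x : n → ℝ) : c * (x ⬝ᵥ x) ≤ x ⬝ᵥ (A *ᵥ x) := by
  have := h.dotProduct_mulVec_nonneg x
  rw [star_trivial, sub_mulVec, dotProduct_sub, smul_mulVec, one_mulVec, dotProduct_smul,
    smul_eq_mul] at this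
  linarith

theorem IsHermitian.neg_smul_one_le_smul {B : Matrix n n ℝ} (hB : B.IsHermitian) (t : ℝ) :
    -(|t| * ∑ i, |hB.eigenvalues i|) • (1 : Matrix n n ℝ) ≤ t • B := by
  set c := ∑ i, |hB.eigenvalues i|
  have hc : ∀ i, |hB.eigenvalues i| ≤ c := fun i =>
    Finset.single_le_sum (f := fun j => |hB.eigenvalues j|) (fun j _ => abs_nonneg _)
      (Finset.mem_univ i)
  have hlow : -c • (1 : Matrix n n ℝ) ≤ B := hB.smul_one_le_iff.2 fun i => neg_le_of_abs_le (hc i)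
  have hup : B ≤ c • (1 : Matrix n n ℝ) := hB.le_smul_one_iff.2 fun i => le_of_abs_le (hc i)
  rw [le_iff] at hlow hup ⊢
  rcases le_total 0 t with ht | ht
  · convert hlow.smul ht using 1
    rw [abs_of_nonneg ht]; module
  · convert hup.smul (neg_nonneg.2 ht) using 1
    rw [abs_of_nonpos ht]; module

theorem IsHermitian.dotProduct_mulVec_le_maxEig {S : Matrix n n ℝ} (hS : S.IsHermitian)
    (v : n → ℝ) : v ⬝ᵥ (S *ᵥ v) ≤ maxEig S * (v ⬝ᵥ v) :=
  dotProduct_mulVec_le_of_le_smul_one (hS.le_smul_one_iff.2 fun i => by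
    rw [maxEig, dif_pos hS]
    exact le_ciSup (Set.finite_range _).bddAbove i) v

theorem IsHermitian.minEig_le_dotProduct_mulVec {S : Matrix n n ℝ} (hS : S.IsHermitian)
    (v : n → ℝ) : minEig S * (v ⬝ᵥ v) ≤ v ⬝ᵥ (S *ᵥ v) :=
  le_dotProduct_mulVec_of_smul_one_le (hS.smul_one_le_iff.2 fun i => by
    rw [minEig, dif_pos hS]
    exact ciInf_le (Set.finite_range _).bddBelow i) v

theorem IsHermitian.dotProduct_eigenvectorBasis_self {A : Matrix n n ℝ} (hA : A.IsHermitian)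
    (i : n) : ⇑(hA.eigenvectorBasis i) ⬝ᵥ ⇑(hA.eigenvectorBasis i) = 1 := by
  have h : inner ℝ (hA.eigenvectorBasis i) (hA.eigenvectorBasis i) = 1 := by
    rw [real_inner_self_eq_norm_sq, hA.eigenvectorBasis.orthonormal.1 i, one_pow]
  rwa [EuclideanSpace.inner_eq_star_dotProduct, star_trivial] at h

theorem det_one_add_vecMulVec {K : Type*} [CommRing K] (u w : n → K) :
    (1 + vecMulVec u w).det = 1 + w ⬝ᵥ u := by
  rw [vecMulVec_eq Unit, det_one_add_replicateCol_mul_replicateRow]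

theorem det_add_smul_vecMulVec_of_mulVec_eq {K : Type*} [Field K] {A : Matrix n n K}
    {v : n → K} {θ : K} (hθ : θ ≠ 0) (hv : A *ᵥ v = θ • v) (t : K) :
    (A + t • vecMulVec v v).det = A.det * (1 + t / θ * (v ⬝ᵥ v)) := by
  have hfac : A + t • vecMulVec v v = A * (1 + vecMulVec ((t / θ) • v) v) := by
    rw [mul_add, mul_one, mul_vecMulVec, mulVec_smul, hv, smul_smul, div_mul_cancel₀ t hθ,
      smul_vecMulVec]
  rw [hfac, det_mul, det_one_add_vecMulVec, dotProduct_smul, smul_eq_mul]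

open Filter Topology in
theorem PosDef.eventually_posDef_add_smul [Nonempty n] {A B : Matrix n n ℝ} (hA : A.PosDef)
    (hB : B.IsHermitian) : ∀ᶠ t : ℝ in 𝓝 0, (A + t • B).PosDef := by
  obtain ⟨i₀, hi₀⟩ := Finite.exists_min hA.isHermitian.eigenvalues
  set r := hA.isHermitian.eigenvalues i₀
  have hrA : r • (1 : Matrix n n ℝ) ≤ A := hA.isHermitian.smul_one_le_iff.2 hi₀
  set c := ∑ i, |hB.eigenvalues i|
  have hsmall : ∀ᶠ t : ℝ in 𝓝 0, |t| * c < r := by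
    have : Tendsto (fun t : ℝ => |t| * c) (𝓝 0) (𝓝 0) :=
      Continuous.tendsto' (by fun_prop) 0 0 (by simp)
    exact this.eventually (gt_mem_nhds (hA.eigenvalues_pos i₀))
  filter_upwards [hsmall] with t ht
  refine PosDef.of_smul_one_le (sub_pos.2 ht) ?_
  calc (r - |t| * c) • (1 : Matrix n n ℝ) = r • 1 + -(|t| * c) • 1 := by module
    _ ≤ A + t • B := add_le_add hrA (hB.neg_smul_one_le_smul t)

end Matrix

section Norms

variable {n : Type*} [Fintype n]

theorem frobNorm_sq (A : Matrix n n ℝ) : frobNorm A ^ 2 = ∑ i, ∑ j, A i j ^ 2 :=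
  Real.sq_sqrt (by positivity)

theorem frobNorm_sq_add_smul_vecMulVec (A : Matrix n n ℝ) (v : n → ℝ) (t : ℝ) :
    frobNorm (A + t • vecMulVec v v) ^ 2
      = frobNorm A ^ 2 + 2 * t * (v ⬝ᵥ (A *ᵥ v)) + t ^ 2 * (v ⬝ᵥ v) ^ 2 := by
  have hentry : ∀ i j, (A + t • vecMulVec v v) i j ^ 2
      = A i j ^ 2 + 2 * t * (v i * (A i j * v j)) + t ^ 2 * (v i * v i * (v j * v j)) := by
    intro i j
    simp only [Matrix.add_apply, Matrix.smul_apply, vecMulVec_apply, smul_eq_mul]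
    ring
  simp only [frobNorm_sq, hentry, Finset.sum_add_distrib, ← Finset.mul_sum, dotProduct, mulVec,
    sq (∑ i, v i * v i), Finset.sum_mul_sum]

theorem l1Norm_add_smul_le (A E : Matrix n n ℝ) (t : ℝ) :
    l1Norm (A + t • E) ≤ l1Norm A + |t| * l1Norm E := by
  simp only [l1Norm, Finset.mul_sum, ← Finset.sum_add_distrib]
  gcongr with i _ j _
  simpa [abs_mul] using abs_add_le (A i j) (t * E i j)

theorem l1Norm_vecMulVec_self_le (v : n → ℝ) :
    l1Norm (vecMulVec v v) ≤ Fintype.card n * (v ⬝ᵥ v) := by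
  have hl1 : l1Norm (vecMulVec v v) = (∑ i, |v i|) ^ 2 := by
    simp only [l1Norm, vecMulVec_apply, abs_mul, sq, Finset.sum_mul_sum]
  have hdot : v ⬝ᵥ v = ∑ i, |v i| ^ 2 := by simp [dotProduct, sq]
  rw [hl1, hdot]
  exact sq_sum_le_card_mul_sum_sq

end Norms

open Filter Topology in
theorem abs_le_of_hasDerivAt_of_eventually_nonneg {g : ℝ → ℝ} {g' K : ℝ}
    (hg : HasDerivAt g g' 0) (hg0 : g 0 = 0) (h : ∀ᶠ t in 𝓝 0, 0 ≤ g t + K * |t|) :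
    |g'| ≤ K := by
  rw [hasDerivAt_iff_tendsto_slope] at hg
  have hright : Tendsto (slope g 0) (𝓝[>] 0) (𝓝 g') :=
    hg.mono_left (nhdsWithin_mono _ fun t ht => ne_of_gt ht)
  have hleft : Tendsto (slope g 0) (𝓝[<] 0) (𝓝 g') :=
    hg.mono_left (nhdsWithin_mono _ fun t ht => ne_of_lt ht)
  refine abs_le.2 ⟨ge_of_tendsto hright ?_, le_of_tendsto hleft ?_⟩
  · filter_upwards [nhdsWithin_le_nhds h, self_mem_nhdsWithin] with t ht (htpos : 0 < t)
    rw [slope_def_field, hg0, sub_zero, sub_zero, le_div_iff₀ htpos]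
    rw [abs_of_pos htpos] at ht
    linarith
  · filter_upwards [nhdsWithin_le_nhds h, self_mem_nhdsWithin] with t ht (htneg : t < 0)
    rw [slope_def_field, hg0, sub_zero, sub_zero, div_le_iff_of_neg htneg]
    rw [abs_of_neg htneg] at ht
    linarith

theorem pos_and_inv_sub_mul_eq_of_inv_eq {a m γ : ℝ} (hγ : 0 < γ)
    (ha : a⁻¹ = (m + Real.sqrt (m ^ 2 + 8 * γ)) / 2) : 0 < a ∧ a⁻¹ - 2 * γ * a = m := by
  set s := Real.sqrt (m ^ 2 + 8 * γ)
  have hs2 : s ^ 2 = m ^ 2 + 8 * γ := Real.sq_sqrt (by positivity)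
  have hms : 0 < m + s := by
    have : |m| < s := Real.lt_sqrt_of_sq_lt (by rw [sq_abs]; linarith)
    linarith [neg_abs_le m]
  have hapos : 0 < a := inv_pos.1 (by rw [ha]; positivity)
  refine ⟨hapos, ?_⟩
  have ha' : a = 2 / (m + s) := by rw [← inv_inv a, ha, inv_div]
  rw [ha, ha']
  field_simp
  linear_combination hs2

theorem strictAntiOn_inv_sub_mul {c : ℝ} (hc : 0 ≤ c) :
    StrictAntiOn (fun x : ℝ => x⁻¹ - c * x) (Set.Ioi 0) := by
  intro x hx y hy hxy
  have := inv_strictAntiOn hx hy hxy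
  simp only
  nlinarith

section Objective

variable {n : Type*} [Fintype n] [DecidableEq n]

theorem genObj_add_smul_vecMulVec_sub_le {S Ω : Matrix n n ℝ} {v : n → ℝ} {θ γ1 γ2 t : ℝ}
    (hΩ : Ω.PosDef) (hθ : θ ≠ 0) (hv : Ω *ᵥ v = θ • v) (hvv : v ⬝ᵥ v = 1) (hγ1 : 0 ≤ γ1)
    (ht : (Ω + t • vecMulVec v v).PosDef) :
    genObj S γ1 γ2 (Ω + t • vecMulVec v v) - genObj S γ1 γ2 Ω
      ≤ t * (v ⬝ᵥ (S *ᵥ v)) - Real.log (1 + t / θ) + γ2 * (2 * θ * t + t ^ 2)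
        + γ1 * Fintype.card n * |t| := by
  have hdet := det_add_smul_vecMulVec_of_mulVec_eq hθ hv t
  rw [hvv, mul_one] at hdet
  have hfactor : 0 < 1 + t / θ := pos_of_mul_pos_right (hdet ▸ ht.det_pos) hΩ.det_pos.le
  have hlog : Real.log (Ω + t • vecMulVec v v).det = Real.log Ω.det + Real.log (1 + t / θ) := by
    rw [hdet, Real.log_mul hΩ.det_pos.ne' hfactor.ne']
  have htrace : (S * (Ω + t • vecMulVec v v)).trace = (S * Ω).trace + t * (v ⬝ᵥ (S *ᵥ v)) := by
    rw [mul_add, trace_add, Matrix.mul_smul, trace_smul, mul_vecMulVec, trace_vecMulVec,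
      dotProduct_comm, smul_eq_mul]
  have hfrob : frobNorm (Ω + t • vecMulVec v v) ^ 2 = frobNorm Ω ^ 2 + 2 * θ * t + t ^ 2 := by
    rw [frobNorm_sq_add_smul_vecMulVec, hv, dotProduct_smul, hvv, smul_eq_mul]
    ring
  have hl1 : l1Norm (Ω + t • vecMulVec v v) ≤ l1Norm Ω + |t| * Fintype.card n := by
    refine (l1Norm_add_smul_le Ω (vecMulVec v v) t).trans ?_
    gcongr
    simpa [hvv] using l1Norm_vecMulVec_self_le v
  simp only [genObj, htrace, hlog, hfrob]
  linarith [mul_le_mul_of_nonneg_left hl1 hγ1]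

open Filter Topology in
theorem abs_dotProduct_mulVec_sub_inv_add_le_of_forall_genObj_le [Nonempty n] {S Ω : Matrix n n ℝ}
    {v : n → ℝ} {θ γ1 γ2 : ℝ} (hΩ : Ω.PosDef)
    (hmin : ∀ M : Matrix n n ℝ, M.PosDef → genObj S γ1 γ2 Ω ≤ genObj S γ1 γ2 M)
    (hθ : θ ≠ 0) (hv : Ω *ᵥ v = θ • v) (hvv : v ⬝ᵥ v = 1) (hγ1 : 0 ≤ γ1) :
    |v ⬝ᵥ (S *ᵥ v) - θ⁻¹ + 2 * γ2 * θ| ≤ γ1 * Fintype.card n := by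
  set c := v ⬝ᵥ (S *ᵥ v)
  have hderiv : HasDerivAt (fun t => t * c - Real.log (1 + t / θ) + γ2 * (2 * θ * t + t ^ 2))
      (c - θ⁻¹ + 2 * γ2 * θ) 0 := by
    have hlog : HasDerivAt (fun t => Real.log (1 + t / θ)) θ⁻¹ 0 :=
      ((((hasDerivAt_id (0 : ℝ)).div_const θ).const_add 1).log (by simp)).congr_deriv (by simp)
    exact (((hasDerivAt_mul_const c).sub hlog).add (HasDerivAt.const_mul γ2
      (((hasDerivAt_id 0).const_mul (2 * θ)).add (hasDerivAt_pow 2 0)))).congr_deriv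
      (by norm_num; ring)
  refine abs_le_of_hasDerivAt_of_eventually_nonneg hderiv (by simp) ?_
  have hE : (vecMulVec v v).IsHermitian := by
    simpa using (posSemidef_vecMulVec_self_star v).isHermitian
  filter_upwards [hΩ.eventually_posDef_add_smul hE] with t ht
  have := genObj_add_smul_vecMulVec_sub_le hΩ hθ hv hvv hγ1 ht (S := S) (γ2 := γ2)
  have := hmin _ ht
  linarith

end Objective

theorem stmt0_general {p : ℕ}
    (S : Matrix (Fin p) (Fin p) ℝ) (hS : S.IsHermitian)
    (γ1 γ2 : ℝ) (hγ1 : 0 < γ1) (hγ2 : 0 < γ2)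
    (Ωstar : Matrix (Fin p) (Fin p) ℝ) (hΩstar : Ωstar.PosDef)
    (hmin : ∀ M : Matrix (Fin p) (Fin p) ℝ, M.PosDef →
      genObj S γ1 γ2 Ωstar ≤ genObj S γ1 γ2 M)
    (α β : ℝ)
    (hα : α⁻¹ = (maxEig S + γ1 * p + Real.sqrt ((maxEig S + γ1 * p)^2 + 8*γ2)) / 2)
    (hβ : β⁻¹ = (minEig S - γ1 * p + Real.sqrt ((minEig S - γ1 * p)^2 + 8*γ2)) / 2) :
    loewnerLE (α • (1 : Matrix (Fin p) (Fin p) ℝ)) Ωstar ∧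
      loewnerLE Ωstar (β • (1 : Matrix (Fin p) (Fin p) ℝ)) := by
  have hΩ := hΩstar.isHermitian
  obtain ⟨hαpos, hαroot⟩ := pos_and_inv_sub_mul_eq_of_inv_eq hγ2 hα
  obtain ⟨hβpos, hβroot⟩ := pos_and_inv_sub_mul_eq_of_inv_eq hγ2 hβ
  have hanti := strictAntiOn_inv_sub_mul (c := 2 * γ2) (by positivity)
  have hbounds : ∀ i, α ≤ hΩ.eigenvalues i ∧ hΩ.eigenvalues i ≤ β := by
    intro i
    have : Nonempty (Fin p) := ⟨i⟩
    set v := ⇑(hΩ.eigenvectorBasis i)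
    have hvv : v ⬝ᵥ v = 1 := hΩ.dotProduct_eigenvectorBasis_self i
    have hθ := hΩstar.eigenvalues_pos i
    have hkey := abs_le.1 <| abs_dotProduct_mulVec_sub_inv_add_le_of_forall_genObj_le hΩstar
      hmin hθ.ne' (hΩ.mulVec_eigenvectorBasis i) hvv hγ1.le
    have hSmax := hS.dotProduct_mulVec_le_maxEig v
    have hSmin := hS.minEig_le_dotProduct_mulVec v
    rw [hvv, mul_one] at hSmax hSmin
    rw [Fintype.card_fin] at hkey
    constructor
    · refine (hanti.le_iff_ge hθ hαpos).1 ?_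
      linarith
    · refine (hanti.le_iff_ge hβpos hθ).1 ?_
      linarith
  exact ⟨hΩ.smul_one_le_iff.2 fun i => (hbounds i).1, hΩ.le_smul_one_iff.2 fun i => (hbounds i).2⟩

/-- bounds on the elastic-net penalized precision matrix estimator. -/
theorem stmt0 {p : ℕ} (hp : 0 < p)
    (S : Matrix (Fin p) (Fin p) ℝ) (hS : S.IsHermitian)
    (γ1 γ2 : ℝ) (hγ1 : 0 < γ1) (hγ2 : 0 < γ2)
    (Ωstar : Matrix (Fin p) (Fin p) ℝ) (hΩstar : Ωstar.PosDef)
    (hmin : ∀ M : Matrix (Fin p) (Fin p) ℝ, M.PosDef →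
      genObj S γ1 γ2 Ωstar ≤ genObj S γ1 γ2 M)
    (α β : ℝ)
    (hα : α⁻¹ = (maxEig S + γ1 * p + Real.sqrt ((maxEig S + γ1 * p)^2 + 8*γ2)) / 2)
    (hβ : β⁻¹ = (minEig S - γ1 * p + Real.sqrt ((minEig S - γ1 * p)^2 + 8*γ2)) / 2) :
    loewnerLE (α • (1 : Matrix (Fin p) (Fin p) ℝ)) Ωstar ∧
      loewnerLE Ωstar (β • (1 : Matrix (Fin p) (Fin p) ℝ)) :=
  stmt0_general S hS γ1 γ2 hγ1 hγ2 Ωstar hΩstar hmin α β hα hβ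
end

section
/- Let γ2 > 0 and t > 0, and let Ω be a symmetric positive definite p×p matrix with aI ⪯ Ω ⪯ bI for 0 < a < b. Define Ω_half = Ω − t(S̃ − Ω⁻¹ + 2γ2·Ω) and m_t = 1 − 2tγ2. Then ρ_1(Ω_half) ≤ max(m_t·a + t/a, m_t·b + t/b) − t·ρ_p(S̃). -/
open Matrix BigOperators Kronecker

/-! Rewrite `Ω_half = (m_t Ω + t Ω⁻¹) - t S̃`. The first term is `f(Ω)` for the convex function
`f x = m_t x + t / x`; since the spectrum of `Ω` lies in `[a, b]`, the functional calculus gives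
`f(Ω) ⪯ max (f a) (f b) • I`. Also `t ρ_p(S̃) • I ⪯ t S̃`, and the Loewner order is additive, so
`Ω_half ⪯ (max (f a) (f b) - t ρ_p(S̃)) • I`, which bounds every eigenvalue of `Ω_half`. -/

open scoped MatrixOrder Ring

lemma convexOn_mul_add_mul_inv (m : ℝ) {t : ℝ} (ht : 0 ≤ t) :
    ConvexOn ℝ (Set.Ioi 0) fun x : ℝ => m * x + t * x⁻¹ := by
  have hlin : ConvexOn ℝ (Set.Ioi 0) fun x : ℝ => m * x :=
    (LinearMap.mul ℝ ℝ m).convexOn (convex_Ioi 0)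
  have hinv : ConvexOn ℝ (Set.Ioi 0) fun x : ℝ => t * x⁻¹ := by
    simpa only [smul_eq_mul, _root_.zpow_neg_one] using (convexOn_zpow (𝕜 := ℝ) (-1)).smul ht
  exact hlin.add hinv

section CFC

variable {A : Type*} [Ring A] [StarRing A] [Algebra ℝ A] [TopologicalSpace A] [PartialOrder A]
  [StarOrderedRing A] [ContinuousFunctionalCalculus ℝ A IsSelfAdjoint] [NonnegSpectrumClass ℝ A]

lemma smul_add_smul_ringInverse_le_algebraMap {Ω : A} (hΩ : IsSelfAdjoint Ω) (hΩu : IsUnit Ω)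
    {m t a b : ℝ} (ht : 0 ≤ t) (ha : 0 < a)
    (hl : algebraMap ℝ A a ≤ Ω) (hu : Ω ≤ algebraMap ℝ A b) :
    m • Ω + t • Ω⁻¹ʳ ≤ algebraMap ℝ A (max (m * a + t / a) (m * b + t / b)) := by
  have hspec : spectrum ℝ Ω ⊆ Set.Icc a b := fun x hx =>
    ⟨(algebraMap_le_iff_le_spectrum hΩ).1 hl x hx, (le_algebraMap_iff_spectrum_le hΩ).1 hu x hx⟩
  have hpos : spectrum ℝ Ω ⊆ Set.Ioi 0 := fun x hx => ha.trans_le (hspec hx).1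
  have hcont : ContinuousOn (fun x : ℝ => x⁻¹) (spectrum ℝ Ω) :=
    continuousOn_inv₀.mono fun x hx => (hpos hx).ne'
  have hcfc : cfc (fun x : ℝ => m * x + t * x⁻¹) Ω = m • Ω + t • Ω⁻¹ʳ := by
    rw [cfc_add Ω (fun x => m * x) (fun x => t * x⁻¹) (by fun_prop) (continuousOn_const.mul hcont),
      cfc_const_mul m (fun x => x) Ω, cfc_const_mul t _ Ω hcont, cfc_id' ℝ Ω,
      cfc_ringInverse_id (R := ℝ) (ha_unit := hΩu)]
  rw [← hcfc]
  refine cfc_le_algebraMap _ _ _ fun x hx => ?_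
  have hb : b ∈ Set.Ioi 0 := ha.trans_le ((hspec hx).1.trans (hspec hx).2)
  simpa only [div_eq_mul_inv] using
    (convexOn_mul_add_mul_inv m ht).le_max_of_mem_Icc (Set.mem_Ioi.2 ha) hb (hspec hx)

end CFC

lemma loewnerLE_iff_le {n : Type*} [Fintype n] {A B : Matrix n n ℝ} : loewnerLE A B ↔ A ≤ B :=
  Matrix.le_iff.symm

section Eigenvalues

variable {n : Type*} [Fintype n] [DecidableEq n] {A : Matrix n n ℝ}

lemma Matrix.IsHermitian.le_algebraMap_iff_eigenvalues_le (hA : A.IsHermitian) {c : ℝ} :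
    A ≤ algebraMap ℝ _ c ↔ ∀ i, hA.eigenvalues i ≤ c := by
  rw [le_algebraMap_iff_spectrum_le hA.isSelfAdjoint, hA.spectrum_real_eq_range_eigenvalues,
    Set.forall_mem_range]

lemma Matrix.IsHermitian.algebraMap_le_iff_le_eigenvalues (hA : A.IsHermitian) {c : ℝ} :
    algebraMap ℝ _ c ≤ A ↔ ∀ i, c ≤ hA.eigenvalues i := by
  rw [algebraMap_le_iff_le_spectrum hA.isSelfAdjoint, hA.spectrum_real_eq_range_eigenvalues,
    Set.forall_mem_range]

lemma maxEig_le_of_le_algebraMap [Nonempty n] (hA : A.IsHermitian) {c : ℝ}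
    (h : A ≤ algebraMap ℝ _ c) : maxEig A ≤ c := by
  rw [maxEig, dif_pos hA]
  exact ciSup_le (hA.le_algebraMap_iff_eigenvalues_le.1 h)

lemma algebraMap_minEig_le (hA : A.IsHermitian) : algebraMap ℝ _ (minEig A) ≤ A := by
  rw [hA.algebraMap_le_iff_le_eigenvalues, minEig, dif_pos hA]
  exact fun i => ciInf_le (Set.finite_range _).bddBelow i

end Eigenvalues

theorem stmt9_general {p : ℕ} (hp : 0 < p)
    (S : Matrix (Fin p) (Fin p) ℝ) (hS : S.IsHermitian)
    (γ2 t : ℝ) (ht : 0 < t)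
    (a b : ℝ) (ha : 0 < a)
    (Ω : Matrix (Fin p) (Fin p) ℝ) (hΩ : Ω.PosDef)
    (hl : loewnerLE (a • (1 : Matrix (Fin p) (Fin p) ℝ)) Ω)
    (hu : loewnerLE Ω (b • (1 : Matrix (Fin p) (Fin p) ℝ)))
    (Ωhalf : Matrix (Fin p) (Fin p) ℝ)
    (hhalf : Ωhalf = Ω - t • (S - Ω⁻¹ + (2*γ2) • Ω))
    (mt : ℝ) (hmt : mt = 1 - 2*t*γ2) :
    maxEig Ωhalf ≤ max (mt * a + t / a) (mt * b + t / b) - t * minEig S := by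
  have : Nonempty (Fin p) := ⟨⟨0, hp⟩⟩
  have hsplit : Ωhalf = (mt • Ω + t • Ω⁻¹) - t • S := by
    rw [hhalf, hmt]
    module
  have hgrad : mt • Ω + t • Ω⁻¹ ≤ algebraMap ℝ _ (max (mt * a + t / a) (mt * b + t / b)) := by
    rw [Matrix.nonsing_inv_eq_ringInverse]
    rw [loewnerLE_iff_le, ← Algebra.algebraMap_eq_smul_one] at hl hu
    exact smul_add_smul_ringInverse_le_algebraMap hΩ.1.isSelfAdjoint hΩ.isUnit ht.le ha hl hu
  have hSmin : t • algebraMap ℝ _ (minEig S) ≤ t • S :=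
    smul_le_smul_of_nonneg_left (algebraMap_minEig_le hS) ht.le
  have hherm : Ωhalf.IsHermitian := by
    rw [hsplit]
    exact ((hΩ.1.smul (.all mt)).add (hΩ.1.inv.smul (.all t))).sub (hS.smul (.all t))
  refine maxEig_le_of_le_algebraMap hherm ?_
  rw [hsplit, map_sub, map_mul, ← Algebra.smul_def]
  exact sub_le_sub hgrad hSmin

/-- upper eigenvalue bound for the gradient step. -/
theorem stmt9 {p : ℕ} (hp : 0 < p)
    (S : Matrix (Fin p) (Fin p) ℝ) (hS : S.IsHermitian)
    (γ2 t : ℝ) (hγ2 : 0 < γ2) (ht : 0 < t)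
    (a b : ℝ) (ha : 0 < a) (hab : a < b)
    (Ω : Matrix (Fin p) (Fin p) ℝ) (hΩ : Ω.PosDef)
    (hl : loewnerLE (a • (1 : Matrix (Fin p) (Fin p) ℝ)) Ω)
    (hu : loewnerLE Ω (b • (1 : Matrix (Fin p) (Fin p) ℝ)))
    (Ωhalf : Matrix (Fin p) (Fin p) ℝ)
    (hhalf : Ωhalf = Ω - t • (S - Ω⁻¹ + (2*γ2) • Ω))
    (mt : ℝ) (hmt : mt = 1 - 2*t*γ2) :
    maxEig Ωhalf ≤ max (mt * a + t / a) (mt * b + t / b) - t * minEig S :=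
  stmt9_general hp S hS γ2 t ht a b ha Ω hΩ hl hu Ωhalf hhalf mt hmt
end

section
/- Let γ1 > 0 and γ2 > 0, and let α be as defined below. Suppose α < b' and αI ⪯ Ω^{(k)} ⪯ b'I for some constant b', and let Ω^{(k+1)} = Sft(Ω^{(k)} − t(S̃ − (Ω^{(k)})⁻¹ + 2γ2·Ω^{(k)}), t·γ1). Then for every step size 0 < t ≤ α²/(2γ2·α² + 1), the updated iterate satisfies αI ⪯ Ω^{(k+1)}. -/
open Matrix BigOperators Kronecker

/-!
The update is `Sft M (tγ1)` with `M = (1 - 2γ2 t) Ω + t Ω⁻¹ - t S̃`, and `αI` is reached by adding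
three lower bounds. Soft-thresholding moves every entry by at most `tγ1`, so Gershgorin's theorem
gives `Sft M (tγ1) - M ⪰ -tγ1 p I`. Next `t S̃ ⪯ t ρ₁(S̃) I`. Finally `λ ↦ (1 - 2γ2 t) λ + t / λ`
is nondecreasing on `[α, ∞)` as soon as `t ≤ (1 - 2γ2 t) α²`, which is the step-size condition, so
the functional calculus turns `Ω ⪰ αI` into `(1 - 2γ2 t) Ω + t Ω⁻¹ ⪰ ((1 - 2γ2 t) α + t / α) I`.
The three constants add up to exactly `α` because `α⁻¹` is the positive root of
`x² - (ρ₁(S̃) + γ1 p) x - 2γ2`, i.e. `α⁻¹ = ρ₁(S̃) + γ1 p + 2γ2 α`.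
-/

open scoped MatrixOrder

lemma abs_sign_mul_max_abs_sub_sub_le (a : ℝ) {τ : ℝ} (hτ : 0 ≤ τ) :
    |Real.sign a * max (|a| - τ) 0 - a| ≤ τ := by
  rcases lt_trichotomy a 0 with ha | rfl | ha
  · rw [Real.sign_of_neg ha, abs_of_neg ha, abs_le]
    constructor <;> cases max_cases (-a - τ) 0 <;> linarith
  · simpa using hτ
  · rw [Real.sign_of_pos ha, abs_of_pos ha, abs_le]
    constructor <;> cases max_cases (a - τ) 0 <;> linarith

lemma mul_add_div_le_mul_add_div {a b α x : ℝ} (ha : 0 ≤ a) (hα : 0 < α) (hαx : α ≤ x)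
    (hb : b ≤ a * α ^ 2) : a * α + b / α ≤ a * x + b / x := by
  have hx : 0 < x := hα.trans_le hαx
  have hb' : b ≤ a * x * α :=
    hb.trans (by nlinarith [mul_nonneg (mul_nonneg ha hα.le) (sub_nonneg.2 hαx)])
  have key : a * x + b / x - (a * α + b / α) = (x - α) * (a * x * α - b) / (x * α) := by
    field_simp
    ring
  rw [← sub_nonneg, key]
  exact div_nonneg (mul_nonneg (sub_nonneg.2 hαx) (sub_nonneg.2 hb')) (by positivity)

namespace Matrix

variable {n : Type*}

lemma isHermitian_Sft {A : Matrix n n ℝ} (hA : A.IsHermitian) (τ : ℝ) : (Sft A τ).IsHermitian :=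
  IsHermitian.ext fun i j => by simp [Sft, ← hA.apply i j]

lemma abs_Sft_sub_apply_le (A : Matrix n n ℝ) {τ : ℝ} (hτ : 0 ≤ τ) (i j : n) :
    |(Sft A τ - A) i j| ≤ τ :=
  abs_sign_mul_max_abs_sub_sub_le (A i j) hτ

variable [Fintype n] [DecidableEq n]

lemma IsHermitian.neg_smul_one_le_of_abs_apply_le {A : Matrix n n ℝ} (hA : A.IsHermitian) {τ : ℝ}
    (h : ∀ i j, |A i j| ≤ τ) : (-(τ * Fintype.card n)) • (1 : Matrix n n ℝ) ≤ A := by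
  rw [← Algebra.algebraMap_eq_smul_one, algebraMap_le_iff_le_spectrum hA.isSelfAdjoint]
  intro μ hμ
  rw [← spectrum_toLin', ← Module.End.hasEigenvalue_iff_mem_spectrum] at hμ
  obtain ⟨k, hk⟩ := eigenvalue_mem_ball hμ
  rw [Metric.mem_closedBall, Real.dist_eq, abs_le] at hk
  have hrow : ∑ j ∈ Finset.univ.erase k, ‖A k j‖ - A k k ≤ τ * Fintype.card n :=
    calc ∑ j ∈ Finset.univ.erase k, ‖A k j‖ - A k k ≤ ∑ j, |A k j| := by
          rw [← Finset.add_sum_erase _ _ (Finset.mem_univ k)]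
          simp only [Real.norm_eq_abs]
          linarith [neg_abs_le (A k k)]
      _ ≤ ∑ _j : n, τ := Finset.sum_le_sum fun j _ => h k j
      _ = τ * Fintype.card n := by simp [mul_comm]
  linarith [hk.1]

lemma IsHermitian.le_maxEig_smul_one {A : Matrix n n ℝ} (hA : A.IsHermitian) :
    A ≤ maxEig A • (1 : Matrix n n ℝ) := by
  rw [← Algebra.algebraMap_eq_smul_one]
  refine le_algebraMap_of_spectrum_le fun μ hμ => ?_
  obtain ⟨i, rfl⟩ := hA.spectrum_real_eq_range_eigenvalues ▸ hμ
  rw [maxEig, dif_pos hA]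
  exact le_ciSup (Set.finite_range _).bddAbove i

lemma PosDef.smul_one_le_smul_add_smul_inv {A : Matrix n n ℝ} (hA : A.PosDef) {a b α : ℝ}
    (ha : 0 ≤ a) (hα : 0 < α) (hb : b ≤ a * α ^ 2) (hαA : α • (1 : Matrix n n ℝ) ≤ A) :
    (a * α + b / α) • (1 : Matrix n n ℝ) ≤ a • A + b • A⁻¹ := by
  rw [← Algebra.algebraMap_eq_smul_one, algebraMap_le_iff_le_spectrum] at hαA
  have hne : ∀ x ∈ spectrum ℝ A, x ≠ 0 := fun x hx => (hα.trans_le (hαA x hx)).ne'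
  have hcfc : cfc (fun x => a * x + b * x⁻¹) A = a • A + b • A⁻¹ := by
    rw [cfc_add .., cfc_const_mul .., cfc_const_mul .., cfc_id' ..,
      cfc_ringInverse_id A hA.isUnit, nonsing_inv_eq_ringInverse]
  rw [← hcfc, ← Algebra.algebraMap_eq_smul_one]
  refine algebraMap_le_cfc _ _ A fun x hx => ?_
  simpa [div_eq_mul_inv] using mul_add_div_le_mul_add_div ha hα (hαA x hx) hb

end Matrix

lemma pos_and_inv_eq_of_inv_eq_half_add_sqrt {c γ α : ℝ} (hγ : 0 < γ)
    (hα : α⁻¹ = (c + √(c ^ 2 + 8 * γ)) / 2) : 0 < α ∧ α⁻¹ = c + 2 * γ * α := by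
  have hroot : √(c ^ 2 + 8 * γ) ^ 2 = c ^ 2 + 8 * γ := Real.sq_sqrt (by positivity)
  have hα0 : 0 < α := by
    have : |c| < √(c ^ 2 + 8 * γ) := by
      rw [← Real.sqrt_sq_eq_abs]
      exact Real.sqrt_lt_sqrt (sq_nonneg c) (by linarith)
    rw [← inv_pos, hα]
    linarith [neg_abs_le c]
  refine ⟨hα0, ?_⟩
  have hquad : α⁻¹ * α⁻¹ - c * α⁻¹ - 2 * γ = 0 := by
    rw [hα]; linear_combination hroot / 4
  linear_combination α * hquad + (c - α⁻¹) * mul_inv_cancel₀ hα0.ne'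

theorem stmt12_general {p : ℕ}
    (S : Matrix (Fin p) (Fin p) ℝ) (hS : S.IsHermitian)
    (γ1 γ2 : ℝ) (hγ1 : 0 < γ1) (hγ2 : 0 < γ2)
    (α : ℝ)
    (hα : α⁻¹ = (maxEig S + γ1 * p + Real.sqrt ((maxEig S + γ1 * p)^2 + 8*γ2)) / 2)
    (Ωk : Matrix (Fin p) (Fin p) ℝ) (hΩk : Ωk.PosDef)
    (hl : loewnerLE (α • (1 : Matrix (Fin p) (Fin p) ℝ)) Ωk)
    (t : ℝ) (ht0 : 0 < t) (ht : t ≤ α^2 / (2*γ2*α^2 + 1)) :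
    loewnerLE (α • (1 : Matrix (Fin p) (Fin p) ℝ))
      (Sft (Ωk - t • (S - Ωk⁻¹ + (2*γ2) • Ωk)) (t*γ1)) := by
  obtain ⟨hα0, hαinv⟩ := pos_and_inv_eq_of_inv_eq_half_add_sqrt hγ2 hα
  have hb : t ≤ (1 - 2 * γ2 * t) * α ^ 2 := by
    rw [le_div_iff₀ (by positivity)] at ht
    linarith
  have ha : 0 ≤ 1 - 2 * γ2 * t := by nlinarith
  have hΩherm := hΩk.isHermitian
  set M := Ωk - t • (S - Ωk⁻¹ + (2*γ2) • Ωk) with hM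
  have hMherm : M.IsHermitian := hΩherm.sub <|
    ((hS.sub hΩherm.inv).add (hΩherm.smul (.all _))).smul (.all _)
  have hE := ((isHermitian_Sft hMherm _).sub hMherm).neg_smul_one_le_of_abs_apply_le
    (abs_Sft_sub_apply_le M (by positivity : 0 ≤ t * γ1))
  have hSle := smul_le_smul_of_nonneg_left hS.le_maxEig_smul_one ht0.le
  have hΩle := hΩk.smul_one_le_smul_add_smul_inv ha hα0 hb hl
  have hαeq : α = -(t * γ1 * p) + ((1 - 2 * γ2 * t) * α + t / α) - t * maxEig S := by
    rw [div_eq_mul_inv, hαinv]; ring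
  -- `loewnerLE A B` is definitionally `A ≤ B` for the `MatrixOrder` order
  change α • 1 ≤ Sft M (t * γ1)
  calc α • (1 : Matrix (Fin p) (Fin p) ℝ)
      = (-(t * γ1 * p)) • 1 + ((1 - 2 * γ2 * t) * α + t / α) • 1 - t • (maxEig S • 1) := by
        rw [smul_smul, ← add_smul, ← sub_smul, ← hαeq]
    _ ≤ (Sft M (t * γ1) - M) + ((1 - 2 * γ2 * t) • Ωk + t • Ωk⁻¹) - t • S := by
        simp only [Fintype.card_fin] at hE
        exact sub_le_sub (add_le_add hE hΩle) hSle
    _ = Sft M (t * γ1) := by rw [hM]; module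

/-- the GEN-ISTA update preserves the lower bound αI. -/
theorem stmt12 {p : ℕ} (hp : 0 < p)
    (S : Matrix (Fin p) (Fin p) ℝ) (hS : S.IsHermitian)
    (γ1 γ2 : ℝ) (hγ1 : 0 < γ1) (hγ2 : 0 < γ2)
    (α : ℝ)
    (hα : α⁻¹ = (maxEig S + γ1 * p + Real.sqrt ((maxEig S + γ1 * p)^2 + 8*γ2)) / 2)
    (b' : ℝ) (hαb : α < b')
    (Ωk : Matrix (Fin p) (Fin p) ℝ) (hΩk : Ωk.PosDef)
    (hl : loewnerLE (α • (1 : Matrix (Fin p) (Fin p) ℝ)) Ωk)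
    (hu : loewnerLE Ωk (b' • (1 : Matrix (Fin p) (Fin p) ℝ)))
    (t : ℝ) (ht0 : 0 < t) (ht : t ≤ α^2 / (2*γ2*α^2 + 1)) :
    loewnerLE (α • (1 : Matrix (Fin p) (Fin p) ℝ))
      (Sft (Ωk - t • (S - Ωk⁻¹ + (2*γ2) • Ωk)) (t*γ1)) :=
  stmt12_general S hS γ1 γ2 hγ1 hγ2 α hα Ωk hΩk hl t ht0 ht
end
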